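/- Let M ≥ 1 and consider the weighted parareal iteration with per-step coarse propagators C_n, fine propagators F_n, and initial state g. Assume: (i) each C_n is strictly order-preserving for the componentwise order, i.e. if v_j < w_j for all j then (C_n v)_j < (C_n w)_j for all j; (ii) each F_n maps vectors strictly above the fine trajectory to vectors strictly above the fine trajectory, i.e. if v_j > (u^f_n)_j for all j then (F_n v)_j > (u^f_{n+1})_j for all j; (iii) the zeroth iterate lies strictly above the fine trajectory: (U^0_n)_j > (u^f_n)_j for all n ≥ 1 and all j. Then there exists a choice of strictly positive weights θ : ℕ → ℕ → Fin M → (0,∞) such that for every k ≥ 1 and every n > k, the iterates satisfy componentwise (u^f_n)_j < (U^k_n)_j < (U^{k-1}_n)_j for all j; that is, the weighted parareal iterates form a strictly decreasing sequence that stays strictly above the fine solution. -/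
import Mathlib


namespace PararealAux

variable {M : ℕ}

/-- The chosen weight, given the previous iterate `Uk`, the step `n`, and the
current value `X` of the new iterate at time `n`. -/
noncomputable def theta0 (C F : ℕ → (Fin M → ℝ) → (Fin M → ℝ))
    (uf Uk : ℕ → Fin M → ℝ) (n : ℕ) (X : Fin M → ℝ) (j : Fin M) : ℝ :=
  if C n X j - C n (Uk n) j < 0 ∧ uf (n+1) j < F n (Uk n) j ∧ uf (n+1) j < Uk (n+1) j then
    ((uf (n+1) j + min (F n (Uk n) j) (Uk (n+1) j)) / 2 - F n (Uk n) j)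
      / (C n X j - C n (Uk n) j)
  else 1

lemma theta0_pos (C F : ℕ → (Fin M → ℝ) → (Fin M → ℝ))
    (uf Uk : ℕ → Fin M → ℝ) (n : ℕ) (X : Fin M → ℝ) (j : Fin M) :
    0 < theta0 C F uf Uk n X j := by
  unfold theta0
  split_ifs with h
  · obtain ⟨hd, hFj, hU⟩ := h
    have hmin : min (F n (Uk n) j) (Uk (n+1) j) ≤ F n (Uk n) j := min_le_left _ _
    have hnum : (uf (n+1) j + min (F n (Uk n) j) (Uk (n+1) j)) / 2 - F n (Uk n) j < 0 := by
      linarith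
    exact div_pos_of_neg_of_neg hnum hd
  · norm_num

/-- One sweep of the weighted parareal iteration with the canonical weights. -/
noncomputable def Unext (C F : ℕ → (Fin M → ℝ) → (Fin M → ℝ)) (g : Fin M → ℝ)
    (uf Uk : ℕ → Fin M → ℝ) : ℕ → Fin M → ℝ
  | 0 => g
  | n + 1 => fun j =>
      theta0 C F uf Uk n (Unext C F g uf Uk n) j
        * (C n (Unext C F g uf Uk n) j - C n (Uk n) j) + F n (Uk n) j

/-- The canonical iterates. -/
noncomputable def Ufun (C F : ℕ → (Fin M → ℝ) → (Fin M → ℝ)) (g : Fin M → ℝ)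
    (uf U0 : ℕ → Fin M → ℝ) : ℕ → ℕ → Fin M → ℝ
  | 0 => U0
  | k + 1 => Unext C F g uf (Ufun C F g uf U0 k)

section

variable (C F : ℕ → (Fin M → ℝ) → (Fin M → ℝ)) (g : Fin M → ℝ) (uf U0 : ℕ → Fin M → ℝ)

/-- The key step: if at time `n` the new iterate is strictly below `Uk` and `Uk`
is strictly above `uf` at times `n` and `n+1`, then at time `n+1` the new iterate
is strictly between `uf` and `Uk`. -/
lemma step_lemma
    (hC : ∀ n (v w : Fin M → ℝ), (∀ j, v j < w j) → ∀ j, C n v j < C n w j)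
    (hF : ∀ n (v : Fin M → ℝ), (∀ j, uf n j < v j) → ∀ j, uf (n + 1) j < F n v j)
    (Uk : ℕ → Fin M → ℝ) (n : ℕ)
    (hufUk : ∀ j, uf n j < Uk n j) (hufUk1 : ∀ j, uf (n+1) j < Uk (n+1) j)
    (hlt : ∀ j, Unext C F g uf Uk n j < Uk n j) (j : Fin M) :
    uf (n+1) j < Unext C F g uf Uk (n+1) j ∧ Unext C F g uf Uk (n+1) j < Uk (n+1) j := by
  set X := Unext C F g uf Uk n with hX
  have hd : C n X j - C n (Uk n) j < 0 := by
    have := hC n X (Uk n) hlt j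
    linarith
  have hFj : uf (n+1) j < F n (Uk n) j := hF n (Uk n) hufUk j
  have hcond : C n X j - C n (Uk n) j < 0 ∧ uf (n+1) j < F n (Uk n) j ∧
      uf (n+1) j < Uk (n+1) j := ⟨hd, hFj, hufUk1 j⟩
  have hval : Unext C F g uf Uk (n+1) j
      = (uf (n+1) j + min (F n (Uk n) j) (Uk (n+1) j)) / 2 := by
    show theta0 C F uf Uk n X j * (C n X j - C n (Uk n) j) + F n (Uk n) j = _
    rw [theta0, if_pos hcond, div_mul_cancel₀ _ (ne_of_lt hd)]
    ring
  have hmin1 : uf (n+1) j < min (F n (Uk n) j) (Uk (n+1) j) := lt_min hFj (hufUk1 j)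
  have hmin2 : min (F n (Uk n) j) (Uk (n+1) j) ≤ Uk (n+1) j := min_le_right _ _
  constructor
  · rw [hval]; linarith
  · rw [hval]; linarith

end

section

variable (C F : ℕ → (Fin M → ℝ) → (Fin M → ℝ)) (g : Fin M → ℝ) (uf U0 : ℕ → Fin M → ℝ)

/-- Exactness: `Ufun k n = uf n` for `n ≤ k`. -/
lemma exactness (huf0 : uf 0 = g) (hufs : ∀ n, uf (n + 1) = F n (uf n))
    (hU00 : U0 0 = g) :
    ∀ n k, n ≤ k → Ufun C F g uf U0 k n = uf n := by
  intro n
  induction n with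
  | zero =>
    intro k _
    cases k with
    | zero => simpa [Ufun, hU00] using huf0.symm
    | succ k => simp [Ufun, Unext, huf0]
  | succ n ih =>
    intro k hk
    obtain ⟨k', rfl⟩ : ∃ k', k = k' + 1 := ⟨k - 1, by omega⟩
    have h1 : Ufun C F g uf U0 (k' + 1) n = uf n := ih _ (by omega)
    have h2 : Ufun C F g uf U0 k' n = uf n := ih _ (by omega)
    funext j
    show theta0 C F uf (Ufun C F g uf U0 k') n (Unext C F g uf (Ufun C F g uf U0 k') n) j
        * (C n (Unext C F g uf (Ufun C F g uf U0 k') n) j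
            - C n (Ufun C F g uf U0 k' n) j) + F n (Ufun C F g uf U0 k' n) j = uf (n+1) j
    have hU' : Unext C F g uf (Ufun C F g uf U0 k') n = uf n := h1
    rw [hU', h2, hufs]
    ring

/-- Strict upper bound: given the lower invariant at level `m`, each entry of level
`m+1` lies strictly below level `m` for `n > m`. -/
lemma upper
    (hC : ∀ n (v w : Fin M → ℝ), (∀ j, v j < w j) → ∀ j, C n v j < C n w j)
    (hF : ∀ n (v : Fin M → ℝ), (∀ j, uf n j < v j) → ∀ j, uf (n + 1) j < F n v j)
    (huf0 : uf 0 = g) (hufs : ∀ n, uf (n + 1) = F n (uf n)) (hU00 : U0 0 = g)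
    (m : ℕ) (Hm : ∀ n, m < n → ∀ j, uf n j < Ufun C F g uf U0 m n j) :
    ∀ n, m < n → ∀ j, Ufun C F g uf U0 (m+1) n j < Ufun C F g uf U0 m n j := by
  intro n
  induction n with
  | zero => omega
  | succ n ih =>
    intro hn j
    rcases Nat.lt_or_ge m n with hmn | hmn
    · -- step case: n > m
      have hstep := step_lemma C F g uf hC hF (Ufun C F g uf U0 m) n
        (Hm n hmn) (Hm (n+1) (by omega)) (ih hmn) j
      exact hstep.2
    · -- base case: n = m
      have hnm : n = m := by omega
      subst hnm
      have hx : Ufun C F g uf U0 (n+1) (n+1) = uf (n+1) :=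
        exactness C F g uf U0 huf0 hufs hU00 (n+1) (n+1) le_rfl
      have := Hm (n+1) (by omega) j
      rw [hx]
      exact this

/-- Strict lower bound at level `m+1`, for `n > m+1`. -/
lemma lower
    (hC : ∀ n (v w : Fin M → ℝ), (∀ j, v j < w j) → ∀ j, C n v j < C n w j)
    (hF : ∀ n (v : Fin M → ℝ), (∀ j, uf n j < v j) → ∀ j, uf (n + 1) j < F n v j)
    (huf0 : uf 0 = g) (hufs : ∀ n, uf (n + 1) = F n (uf n)) (hU00 : U0 0 = g)
    (m : ℕ) (Hm : ∀ n, m < n → ∀ j, uf n j < Ufun C F g uf U0 m n j) :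
    ∀ n, m + 1 < n → ∀ j, uf n j < Ufun C F g uf U0 (m+1) n j := by
  intro n hn j
  obtain ⟨n', rfl⟩ : ∃ n', n = n' + 1 := ⟨n - 1, by omega⟩
  have hstep := step_lemma C F g uf hC hF (Ufun C F g uf U0 m) n'
    (Hm n' (by omega)) (Hm (n'+1) (by omega))
    (fun j => upper C F g uf U0 hC hF huf0 hufs hU00 m Hm n' (by omega) j) j
  exact hstep.1

/-- The lower invariant holds at every level. -/
lemma lowAll
    (hC : ∀ n (v w : Fin M → ℝ), (∀ j, v j < w j) → ∀ j, C n v j < C n w j)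
    (hF : ∀ n (v : Fin M → ℝ), (∀ j, uf n j < v j) → ∀ j, uf (n + 1) j < F n v j)
    (huf0 : uf 0 = g) (hufs : ∀ n, uf (n + 1) = F n (uf n)) (hU00 : U0 0 = g)
    (hinit : ∀ n, 1 ≤ n → ∀ j, uf n j < U0 n j) :
    ∀ m n, m < n → ∀ j, uf n j < Ufun C F g uf U0 m n j := by
  intro m
  induction m with
  | zero => intro n hn j; exact hinit n hn j
  | succ m ih => exact lower C F g uf U0 hC hF huf0 hufs hU00 m ih

end

end PararealAux

/-- **Existence of stabilizing positive weights for the weighted parareal iteration.**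
Fix `M ≥ 1`, coarse propagators `C n`, fine propagators `F n`, and initial state `g`.
The fine trajectory `uf` satisfies `uf 0 = g`, `uf (n+1) = F n (uf n)`; the zeroth
iterate `U0` satisfies `U0 0 = g`, `U0 (n+1) = C n (U0 n)`.  Assume
(i) each `C n` is strictly order-preserving for the componentwise strict order;
(ii) each `F n` maps vectors strictly above `uf n` to vectors strictly above `uf (n+1)`;
(iii) `U0 n` lies componentwise strictly above `uf n` for all `n ≥ 1`.
Then there are strictly positive weights `θ` such that the resulting weighted parareal
iterates `U` (with `U 0 = U0`, `U (k+1) 0 = g`, and the componentwise weighted update)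
satisfy `uf n j < U k n j < U (k-1) n j` for every `k ≥ 1`, every `n > k`, and every `j`. -/
theorem parareal_exists_positive_weights
    (M : ℕ) (hM : 1 ≤ M)
    (C F : ℕ → (Fin M → ℝ) → (Fin M → ℝ))
    (g : Fin M → ℝ)
    (uf U0 : ℕ → Fin M → ℝ)
    (huf0 : uf 0 = g)
    (hufs : ∀ n, uf (n + 1) = F n (uf n))
    (hU00 : U0 0 = g)
    (hU0s : ∀ n, U0 (n + 1) = C n (U0 n))
    (hC : ∀ n (v w : Fin M → ℝ), (∀ j, v j < w j) → ∀ j, C n v j < C n w j)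
    (hF : ∀ n (v : Fin M → ℝ), (∀ j, uf n j < v j) → ∀ j, uf (n + 1) j < F n v j)
    (hinit : ∀ n, 1 ≤ n → ∀ j, uf n j < U0 n j) :
    ∃ θ : ℕ → ℕ → Fin M → ℝ,
      (∀ k n j, 0 < θ k n j) ∧
      ∀ U : ℕ → ℕ → Fin M → ℝ,
        (∀ n, U 0 n = U0 n) →
        (∀ k, U (k + 1) 0 = g) →
        (∀ k n j, U (k + 1) (n + 1) j =
          θ (k + 1) (n + 1) j * (C n (U (k + 1) n) j - C n (U k n) j) + F n (U k n) j) →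
        ∀ k, 1 ≤ k → ∀ n, k < n → ∀ j,
          uf n j < U k n j ∧ U k n j < U (k - 1) n j := by
  classical
  set Uc : ℕ → ℕ → Fin M → ℝ := PararealAux.Ufun C F g uf U0 with hUc
  refine ⟨fun k n j => match k, n with
    | 0, _ => 1
    | k + 1, 0 => 1
    | k + 1, n + 1 => PararealAux.theta0 C F uf (Uc k) n (Uc (k+1) n) j, ?_, ?_⟩
  · intro k n j
    match k, n with
    | 0, n => norm_num
    | k + 1, 0 => norm_num
    | k + 1, n + 1 => exact PararealAux.theta0_pos C F uf (Uc k) n (Uc (k+1) n) j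
  · intro U hU0' hUg hUrec
    -- U agrees with the canonical iterates
    have hagree : ∀ k n, U k n = Uc k n := by
      intro k
      induction k with
      | zero => intro n; simpa [hUc, PararealAux.Ufun] using hU0' n
      | succ k ih =>
        intro n
        induction n with
        | zero => simpa [hUc, PararealAux.Ufun, PararealAux.Unext] using hUg k
        | succ n ihn =>
          funext j
          have := hUrec k n j
          rw [this, ihn, ih]
          show _ = PararealAux.Unext C F g uf (PararealAux.Ufun C F g uf U0 k) (n+1) j
          rfl
    have hlow := PararealAux.lowAll C F g uf U0 hC hF huf0 hufs hU00 hinit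
    intro k hk n hn j
    obtain ⟨m, rfl⟩ : ∃ m, k = m + 1 := ⟨k - 1, by omega⟩
    have h1 : uf n j < Uc (m+1) n j := hlow (m+1) n hn j
    have h2 : Uc (m+1) n j < Uc m n j :=
      PararealAux.upper C F g uf U0 hC hF huf0 hufs hU00 m (hlow m) n (by omega) j
    have hm : m + 1 - 1 = m := by omega
    rw [hagree, hm, hagree]
    exact ⟨h1, h2⟩
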